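/- The cardinality of M₂ is at most 39, and for every d ≥ 2 the cardinality of M_d is at most 3^(4·3^(d−2)) (equivalently, log₃|M_d| ≤ 4·3^(d−2)). -/

import Mathlib

open scoped Pointwise

/-- The recursively defined sets `M₁, M₂, …` of the free group (0-indexed: `Mset s`
corresponds to the paper's `M_{s+1}`, with generator `y_{i+1}` realized as
`FreeGroup.of i`).  `M₁ = {e, y₁, y₁⁻¹}` and
`M_{s+1} = M_s ∪ M_s·y_{s+1}^{±1}·M_s ∪ M_s·y_{s+1}⁻¹·(M_s \ {e})·y_{s+1}·M_s`. -/
def Mset : ℕ → Set (FreeGroup ℕ)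
  | 0 => {1, FreeGroup.of 0, (FreeGroup.of 0)⁻¹}
  | s + 1 =>
      Mset s ∪ Mset s * {FreeGroup.of (s + 1), (FreeGroup.of (s + 1))⁻¹} * Mset s ∪
        Mset s * {(FreeGroup.of (s + 1))⁻¹} * (Mset s \ {1}) * {FreeGroup.of (s + 1)} *
          Mset s

/-! Writing `n = |M_s|`, the union bound and `|X * Y| ≤ |X| |Y|` give
`|M_{s+1}| ≤ n + 2n² + n²(n - 1) = n³ + n² + n < (n + 1)³`, the `n - 1` because `e ∈ M_s` is
removed from the middle factor. Thus `|M_s| < N` implies `|M_{s+1}| < N³`, and iterating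
from `|M₂| ≤ 3³ + 3² + 3 = 39 < 3⁴` gives `|M_d| < 3 ^ (4·3^(d-2))`. -/

lemma Set.ncard_mul_le {M : Type*} [Mul M] [IsCancelMul M] (s t : Set M) :
    (s * t).ncard ≤ s.ncard * t.ncard := by
  simpa only [Nat.card_coe_set_eq] using Set.natCard_mul_le (s := s) (t := t)

lemma ncard_union_mul_union_conj_le {G : Type*} [Group G] {A : Set G} (hA : 1 ∈ A) (g : G) :
    (A ∪ A * {g, g⁻¹} * A ∪ A * {g⁻¹} * (A \ {1}) * {g} * A).ncard ≤
      A.ncard ^ 3 + A.ncard ^ 2 + A.ncard := by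
  set n := A.ncard
  have hpair : ({g, g⁻¹} : Set G).ncard ≤ 2 :=
    (Set.ncard_insert_le _ _).trans (by rw [Set.ncard_singleton])
  have hdiff : (A \ {1}).ncard = n - 1 := Set.ncard_sdiff_singleton_of_mem hA
  calc _ ≤ n + n * 2 * n + n * 1 * (n - 1) * 1 * n := by
        refine (Set.ncard_union_le _ _).trans (add_le_add ((Set.ncard_union_le _ _).trans ?_) ?_)
        · grw [Set.ncard_mul_le, Set.ncard_mul_le, hpair]
        · grw [Set.ncard_mul_le, Set.ncard_mul_le, Set.ncard_mul_le, Set.ncard_mul_le, hdiff,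
            Set.ncard_singleton, Set.ncard_singleton]
    _ = n ^ 3 + n ^ 2 + n := by
        rcases n with _ | m
        · simp
        · simp only [Nat.add_sub_cancel]; ring

lemma pow_three_add_sq_add_lt_pow_three {n N : ℕ} (h : n < N) : n ^ 3 + n ^ 2 + n < N ^ 3 :=
  calc n ^ 3 + n ^ 2 + n < (n + 1) ^ 3 := by nlinarith
    _ ≤ N ^ 3 := by gcongr; omega

lemma one_mem_Mset : ∀ s, (1 : FreeGroup ℕ) ∈ Mset s
  | 0 => by simp [Mset]
  | s + 1 => Or.inl (Or.inl (one_mem_Mset s))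

lemma Mset_zero_ncard_le : (Mset 0).ncard ≤ 3 := by
  rw [Mset, ← Finset.coe_singleton, ← Finset.coe_insert, ← Finset.coe_insert, Set.ncard_coe_finset]
  exact Finset.card_le_three

lemma Mset_succ_ncard_le (s : ℕ) :
    (Mset (s + 1)).ncard ≤ (Mset s).ncard ^ 3 + (Mset s).ncard ^ 2 + (Mset s).ncard :=
  ncard_union_mul_union_conj_le (one_mem_Mset s) _

lemma Mset_one_ncard_le : (Mset 1).ncard ≤ 39 :=
  calc (Mset 1).ncard ≤ (Mset 0).ncard ^ 3 + (Mset 0).ncard ^ 2 + (Mset 0).ncard :=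
        Mset_succ_ncard_le 0
    _ ≤ 3 ^ 3 + 3 ^ 2 + 3 := by grw [Mset_zero_ncard_le]
    _ = 39 := by norm_num

lemma Mset_succ_ncard_lt : ∀ k : ℕ, (Mset (k + 1)).ncard < 3 ^ (4 * 3 ^ k)
  | 0 => by grw [Mset_one_ncard_le]; norm_num
  | k + 1 => by
      have hcube : 3 ^ (4 * 3 ^ (k + 1)) = (3 ^ (4 * 3 ^ k)) ^ 3 := by rw [← pow_mul]; ring_nf
      rw [hcube]
      exact (Mset_succ_ncard_le _).trans_lt
        (pow_three_add_sq_add_lt_pow_three (Mset_succ_ncard_lt k))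

/-- `|M₂| ≤ 39`, and for every `d ≥ 2`,
`|M_d| ≤ 3 ^ (4·3^(d-2))` (equivalently `log₃ |M_d| ≤ 4·3^(d-2)`). -/
theorem Mset_card_bounds :
    (Mset 1).ncard ≤ 39 ∧ ∀ d : ℕ, 2 ≤ d → (Mset (d - 1)).ncard ≤ 3 ^ (4 * 3 ^ (d - 2)) := by
  refine ⟨Mset_one_ncard_le, fun d hd => ?_⟩
  obtain ⟨k, rfl⟩ : ∃ k, d = k + 2 := ⟨d - 2, by omega⟩
  simpa using (Mset_succ_ncard_lt k).le
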